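/- For the Camassa–Holm equation: if m = u - u_xx and u is a smooth periodic solution of m_t + m_x u + 2m u_x = 0, then the functional h₁ = (1/2)∫_{S¹}(u³ + u u_x²) dx is conserved: d/dt h₁ = 0. -/

import Mathlib

open Real intervalIntegral
open scoped ContDiff

noncomputable section CHhelp

/-- partial derivative in direction w -/
def pdv (w : ℝ × ℝ) (F : ℝ × ℝ → ℝ) (q : ℝ × ℝ) : ℝ := fderiv ℝ F q w

lemma contDiff_pdv {F : ℝ × ℝ → ℝ} (hF : ContDiff ℝ ∞ F) (w : ℝ × ℝ) :
    ContDiff ℝ ∞ (pdv w F) :=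
  (hF.fderiv_right (by norm_num)).clm_apply contDiff_const

lemma hasDerivAt_slice2 {F : ℝ × ℝ → ℝ} (hF : ContDiff ℝ ∞ F) (t x : ℝ) :
    HasDerivAt (fun y => F (t, y)) (pdv (0,1) F (t, x)) x := by
  have h1 : HasDerivAt (fun y : ℝ => ((t, y) : ℝ × ℝ)) ((0 : ℝ), (1 : ℝ)) x := by
    simpa using ((hasDerivAt_const x t).prodMk (hasDerivAt_id x))
  exact ((hF.differentiable (by norm_num) (t, x)).hasFDerivAt).comp_hasDerivAt x h1

lemma hasDerivAt_slice1 {F : ℝ × ℝ → ℝ} (hF : ContDiff ℝ ∞ F) (t x : ℝ) :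
    HasDerivAt (fun s => F (s, x)) (pdv (1,0) F (t, x)) t := by
  have h1 : HasDerivAt (fun s : ℝ => ((s, x) : ℝ × ℝ)) ((1 : ℝ), (0 : ℝ)) t := by
    simpa using ((hasDerivAt_id t).prodMk (hasDerivAt_const t x))
  exact ((hF.differentiable (by norm_num) (t, x)).hasFDerivAt).comp_hasDerivAt t h1

lemma pdv_comm {F : ℝ × ℝ → ℝ} (hF : ContDiff ℝ ∞ F) (v w : ℝ × ℝ) (q : ℝ × ℝ) :
    pdv w (pdv v F) q = pdv v (pdv w F) q := by
  have hd : ∀ z : ℝ × ℝ, fderiv ℝ (pdv z F) q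
      = (fderiv ℝ (fderiv ℝ F) q).flip z := by
    intro z
    have hc : DifferentiableAt ℝ (fderiv ℝ F) q :=
      ((hF.fderiv_right (m := ∞) (by norm_num)).differentiable (by norm_num)) q
    have := fderiv_clm_apply (𝕜 := ℝ) hc (differentiableAt_const z)
    rw [show pdv z F = fun y => fderiv ℝ F y z from rfl]
    simpa using this
  have hsymm : IsSymmSndFDerivAt ℝ F q :=
    (hF.contDiffAt).isSymmSndFDerivAt (by rw [minSmoothness_of_isRCLikeNormedField]; exact WithTop.coe_le_coe.2 le_top)
  have h1 : pdv w (pdv v F) q = fderiv ℝ (fderiv ℝ F) q w v := by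
    simp [pdv, hd v]
  have h2 : pdv v (pdv w F) q = fderiv ℝ (fderiv ℝ F) q v w := by
    simp [pdv, hd w]
  rw [h1, h2, hsymm.eq]

end CHhelp


lemma periodic_deriv'' {f : ℝ → ℝ} {T : ℝ} (hf : Function.Periodic f T) :
    Function.Periodic (deriv f) T := by
  intro x
  have h1 : deriv (fun y => f (y + T)) x = deriv f (x + T) := deriv_comp_add_const f T x
  have h2 : (fun y => f (y + T)) = f := funext fun y => hf y
  rw [← h1, h2]

lemma exp_growth_vanish (r : ℝ → ℝ) (hr : ∀ x, HasDerivAt r (r x) x)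
    (hp : Function.Periodic r (2 * π)) : ∀ x, r x = 0 := by
  have hE : ∀ x, HasDerivAt (fun y => exp (-y) * r y) 0 x := by
    intro x
    have h1 : HasDerivAt (fun y : ℝ => exp (-y)) (-exp (-x)) x := by
      simpa using (hasDerivAt_neg x).exp
    have h2 := h1.mul (hr x)
    refine h2.congr_deriv ?_; ring
  have hconst : ∀ x, exp (-x) * r x = exp (-(0:ℝ)) * r 0 := fun x =>
    is_const_of_deriv_eq_zero (fun y => (hE y).differentiableAt) (fun y => (hE y).deriv) x 0
  have hrx : ∀ x, r x = exp x * r 0 := by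
    intro x
    have h := hconst x
    have hx := exp_ne_zero x
    rw [neg_zero, exp_zero, one_mul, exp_neg] at h
    field_simp at h
    linarith [h]
  have h0 : r 0 = 0 := by
    have h2 := hrx (2 * π)
    have h3 : r (2 * π) = r 0 := by simpa using hp 0
    have h4 : (1:ℝ) < exp (2 * π) := by
      rw [Real.one_lt_exp_iff]; positivity
    nlinarith [h2, h3]
  intro x; rw [hrx x, h0, mul_zero]

lemma periodic_selfadjoint_vanish (w s : ℝ → ℝ)
    (hw : ∀ x, HasDerivAt w (s x) x) (hs : ∀ x, HasDerivAt s (w x) x)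
    (hpw : Function.Periodic w (2 * π)) (hps : Function.Periodic s (2 * π)) :
    ∀ x, w x = 0 := by
  have hsum : ∀ x, w x + s x = 0 := by
    apply exp_growth_vanish (fun x => w x + s x)
    · intro x
      have := (hw x).add (hs x)
      refine this.congr_deriv ?_; ring
    · intro x; simp [hpw x, hps x]
  -- now w' = s = -w
  have hE2 : ∀ x, HasDerivAt (fun y => exp y * w y) 0 x := by
    intro x
    have h2 := (Real.hasDerivAt_exp x).mul (hw x)
    refine h2.congr_deriv ?_
    linear_combination (rexp x) * hsum x
  have hconst : ∀ x, exp x * w x = exp 0 * w 0 := fun x =>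
    is_const_of_deriv_eq_zero (fun y => (hE2 y).differentiableAt) (fun y => (hE2 y).deriv) x 0
  have h0 : w 0 = 0 := by
    have h2 := hconst (2 * π)
    have h3 : w (2 * π) = w 0 := by simpa using hpw 0
    have h4 : (1:ℝ) < exp (2 * π) := by rw [Real.one_lt_exp_iff]; positivity
    rw [exp_zero, one_mul, h3] at h2
    nlinarith [h2]
  intro x
  have h := hconst x
  rw [exp_zero, one_mul, h0, mul_eq_zero] at h
  rcases h with h | h
  · exact absurd h (exp_ne_zero x)
  · exact h


lemma ftc_hasDerivAt' {h : ℝ → ℝ} (hc : Continuous h) (x : ℝ) :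
    HasDerivAt (fun b => ∫ s in (0:ℝ)..b, h s) (h x) x :=
  intervalIntegral.integral_hasDerivAt_right (hc.intervalIntegrable _ _)
    (hc.stronglyMeasurableAtFilter _ _) hc.continuousAt

lemma exists_periodic_green (g : ℝ → ℝ) (hgc : Continuous g)
    (hgp : Function.Periodic g (2 * π)) :
    ∃ p r : ℝ → ℝ, (∀ x, HasDerivAt p (r x) x) ∧ (∀ x, HasDerivAt r (p x - g x) x) ∧
      Function.Periodic p (2 * π) ∧ Function.Periodic r (2 * π) := by
  have hi1 : Continuous fun s : ℝ => exp (-s) * g s := by fun_prop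
  have hi2 : Continuous fun s : ℝ => exp s * g s := by fun_prop
  set F₁ : ℝ → ℝ := fun x => ∫ s in (0:ℝ)..x, exp (-s) * g s with hF₁def
  set F₂ : ℝ → ℝ := fun x => ∫ s in (0:ℝ)..x, exp s * g s with hF₂def
  have hDF₁ : ∀ x, HasDerivAt F₁ (exp (-x) * g x) x := fun x => ftc_hasDerivAt' hi1 x
  have hDF₂ : ∀ x, HasDerivAt F₂ (exp x * g x) x := fun x => ftc_hasDerivAt' hi2 x
  set c₁ : ℝ := F₁ (2 * π) / (1 - exp (-(2 * π))) with hc₁def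
  set c₂ : ℝ := F₂ (2 * π) / (exp (2 * π) - 1) with hc₂def
  have hexp2 : (1 : ℝ) < exp (2 * π) := by
    rw [Real.one_lt_exp_iff]; positivity
  have hexp1 : exp (-(2 * π)) < 1 := by
    rw [exp_neg]
    rw [inv_lt_one_iff₀]
    right; exact hexp2
  have hne1 : (1 : ℝ) - exp (-(2 * π)) ≠ 0 := by linarith
  have hne2 : exp (2 * π) - 1 ≠ 0 := by linarith
  have hc₁ : c₁ - F₁ (2 * π) = exp (-(2 * π)) * c₁ := by
    rw [hc₁def]; field_simp; ring
  have hc₂ : c₂ + F₂ (2 * π) = exp (2 * π) * c₂ := by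
    rw [hc₂def]; field_simp; ring
  have hF₁shift : ∀ x, F₁ (x + 2 * π) = F₁ (2 * π) + exp (-(2 * π)) * F₁ x := by
    intro x
    have hadd := intervalIntegral.integral_add_adjacent_intervals
      (hi1.intervalIntegrable (μ := MeasureTheory.volume) 0 (2 * π))
      (hi1.intervalIntegrable (μ := MeasureTheory.volume) (2 * π) (x + 2 * π))
    have hcomp := intervalIntegral.integral_comp_add_right (a := 0) (b := x)
      (fun s => exp (-s) * g s) (2 * π)
    rw [zero_add] at hcomp
    have hcong : (∫ y in (0:ℝ)..x, exp (-(y + 2 * π)) * g (y + 2 * π))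
        = exp (-(2 * π)) * F₁ x := by
      rw [hF₁def, ← intervalIntegral.integral_const_mul]
      apply intervalIntegral.integral_congr
      intro y _
      show rexp (-(y + 2 * π)) * g (y + 2 * π) = rexp (-(2 * π)) * (rexp (-y) * g y)
      rw [hgp y, neg_add, Real.exp_add]
      ring
    simp only [hF₁def]
    rw [← hadd, ← hcomp, hcong]
  have hF₂shift : ∀ x, F₂ (x + 2 * π) = F₂ (2 * π) + exp (2 * π) * F₂ x := by
    intro x
    have hadd := intervalIntegral.integral_add_adjacent_intervals
      (hi2.intervalIntegrable (μ := MeasureTheory.volume) 0 (2 * π))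
      (hi2.intervalIntegrable (μ := MeasureTheory.volume) (2 * π) (x + 2 * π))
    have hcomp := intervalIntegral.integral_comp_add_right (a := 0) (b := x)
      (fun s => exp s * g s) (2 * π)
    rw [zero_add] at hcomp
    have hcong : (∫ y in (0:ℝ)..x, exp (y + 2 * π) * g (y + 2 * π))
        = exp (2 * π) * F₂ x := by
      rw [hF₂def, ← intervalIntegral.integral_const_mul]
      apply intervalIntegral.integral_congr
      intro y _
      show rexp (y + 2 * π) * g (y + 2 * π) = rexp (2 * π) * (rexp y * g y)
      rw [hgp y, Real.exp_add]
      ring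
    simp only [hF₂def]
    rw [← hadd, ← hcomp, hcong]
  set q1 : ℝ → ℝ := fun x => exp x * (c₁ - F₁ x) with hq1def
  set q2 : ℝ → ℝ := fun x => exp (-x) * (c₂ + F₂ x) with hq2def
  have key : ∀ x : ℝ, exp x * exp (-x) = 1 := by
    intro x; rw [← Real.exp_add]; simp
  have hDq1 : ∀ x, HasDerivAt q1 (q1 x - g x) x := by
    intro x
    have h := (Real.hasDerivAt_exp x).mul ((hasDerivAt_const x c₁).sub (hDF₁ x))
    refine h.congr_deriv ?_
    simp only [hq1def, Pi.sub_apply]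
    linear_combination (-(g x)) * key x
  have hDq2 : ∀ x, HasDerivAt q2 (g x - q2 x) x := by
    intro x
    have h1 : HasDerivAt (fun y : ℝ => exp (-y)) (-exp (-x)) x := by
      simpa using (hasDerivAt_neg x).exp
    have h := h1.mul ((hasDerivAt_const x c₂).add (hDF₂ x))
    refine h.congr_deriv ?_
    simp only [hq2def, Pi.add_apply]
    linear_combination (g x) * key x
  have hq1p : Function.Periodic q1 (2 * π) := by
    intro x
    simp only [hq1def]
    rw [hF₁shift x, Real.exp_add]
    linear_combination (exp x * exp (2 * π)) * hc₁
      + (exp (2 * π) * exp (-(2 * π)) - 1) * (exp x * F₁ x)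
      + (c₁ - F₁ x) * exp x * (key (2 * π))
  have hq2p : Function.Periodic q2 (2 * π) := by
    intro x
    simp only [hq2def]
    rw [hF₂shift x, neg_add, Real.exp_add]
    linear_combination (exp (-x) * exp (-(2 * π))) * hc₂
      + (c₂ + F₂ x) * exp (-x) * (key (2 * π))
  refine ⟨fun x => (q1 x + q2 x) / 2, fun x => (q1 x - q2 x) / 2, ?_, ?_, ?_, ?_⟩
  · intro x
    have := ((hDq1 x).add (hDq2 x)).div_const 2
    refine this.congr_deriv ?_; ring
  · intro x
    have := ((hDq1 x).sub (hDq2 x)).div_const 2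
    refine this.congr_deriv ?_; ring
  · intro x; simp only [hq1p x, hq2p x]
  · intro x; simp only [hq1p x, hq2p x]

lemma main_integral (f v : ℝ → ℝ) (hf : ContDiff ℝ ∞ f) (hv : ContDiff ℝ ∞ v)
    (hfp : Function.Periodic f (2 * π)) (hvp : Function.Periodic v (2 * π))
    (hpde : ∀ x, (v x - deriv (deriv v) x) + (deriv f x - deriv (deriv (deriv f)) x) * f x
        + 2 * (f x - deriv (deriv f) x) * deriv f x = 0) :
    (∫ x in (0:ℝ)..(2 * π),
      (3 * f x ^ 2 * v x + v x * (deriv f x) ^ 2 + 2 * f x * deriv f x * deriv v x)) = 0 := by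
  have hf1 : ContDiff ℝ ∞ (deriv f) := (contDiff_infty_iff_deriv.mp hf).2
  have hf2 : ContDiff ℝ ∞ (deriv (deriv f)) := (contDiff_infty_iff_deriv.mp hf1).2
  have hv1 : ContDiff ℝ ∞ (deriv v) := (contDiff_infty_iff_deriv.mp hv).2
  have hDf : ∀ x, HasDerivAt f (deriv f x) x := fun x => (hf.differentiable (by norm_num) x).hasDerivAt
  have hDf1 : ∀ x, HasDerivAt (deriv f) (deriv (deriv f) x) x :=
    fun x => (hf1.differentiable (by norm_num) x).hasDerivAt
  have hDf2 : ∀ x, HasDerivAt (deriv (deriv f)) (deriv (deriv (deriv f)) x) x :=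
    fun x => (hf2.differentiable (by norm_num) x).hasDerivAt
  have hDv : ∀ x, HasDerivAt v (deriv v x) x := fun x => (hv.differentiable (by norm_num) x).hasDerivAt
  have hDv1 : ∀ x, HasDerivAt (deriv v) (deriv (deriv v) x) x :=
    fun x => (hv1.differentiable (by norm_num) x).hasDerivAt
  have hfc : Continuous f := hf.continuous
  have hf1c : Continuous (deriv f) := hf1.continuous
  have hf2c : Continuous (deriv (deriv f)) := hf2.continuous
  have hvc : Continuous v := hv.continuous
  have hv1c : Continuous (deriv v) := hv1.continuous
  have hf1p : Function.Periodic (deriv f) (2 * π) := periodic_deriv'' hfp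
  have hf2p : Function.Periodic (deriv (deriv f)) (2 * π) := periodic_deriv'' hf1p
  have hv1p : Function.Periodic (deriv v) (2 * π) := periodic_deriv'' hvp
  set g : ℝ → ℝ := fun x => f x ^ 2 + (deriv f x) ^ 2 / 2 with hgdef
  have hgc : Continuous g := by
    exact (hfc.pow 2).add ((hf1c.pow 2).div_const 2)
  have hgp : Function.Periodic g (2 * π) := by
    intro x; simp only [hgdef]; rw [hfp x, hf1p x]
  have hDg : ∀ x, HasDerivAt g (2 * f x * deriv f x + deriv f x * deriv (deriv f) x) x := by
    intro x
    have h := ((hDf x).pow 2).add (((hDf1 x).pow 2).div_const 2)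
    refine h.congr_deriv ?_
    push_cast
    ring
  obtain ⟨p, r, hDp, hDr, hpp, hrp⟩ := exists_periodic_green g hgc hgp
  have hpc : Continuous p :=
    (Differentiable.continuous fun x => (hDp x).differentiableAt)
  have hrc : Continuous r :=
    (Differentiable.continuous fun x => (hDr x).differentiableAt)
  -- w = v + f f' + r  satisfies w'' = w and is periodic, hence vanishes
  have hDw : ∀ x, HasDerivAt (fun y => v y + f y * deriv f y + r y)
      (deriv v x + deriv f x * deriv f x + f x * deriv (deriv f) x + (p x - g x)) x := by
    intro x
    have h := ((hDv x).add ((hDf x).mul (hDf1 x))).add (hDr x)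
    refine h.congr_deriv ?_
    ring
  have hDs1 : ∀ x, HasDerivAt
      (fun y => deriv v y + deriv f y * deriv f y + f y * deriv (deriv f) y + (p y - g y))
      (v x + f x * deriv f x + r x) x := by
    intro x
    have h := (((hDv1 x).add ((hDf1 x).mul (hDf1 x))).add ((hDf x).mul (hDf2 x))).add
      ((hDp x).sub (hDg x))
    refine h.congr_deriv ?_
    linear_combination (-1 : ℝ) * (hpde x)
  have hw0 : ∀ x, v x + f x * deriv f x + r x = 0 := by
    apply periodic_selfadjoint_vanish _ _ hDw hDs1
    · intro x
      simp only [hvp x, hfp x, hf1p x, hrp x]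
    · intro x
      simp only [hv1p x, hf1p x, hfp x, hf2p x, hpp x, hgp x]
  have hveq : ∀ x, v x = -(f x * deriv f x) - r x := by
    intro x; linarith [hw0 x]
  have hvfun : v = fun x => -(f x * deriv f x) - r x := funext hveq
  have hv1eq : ∀ x, deriv v x
      = f x ^ 2 - (deriv f x) ^ 2 / 2 - f x * deriv (deriv f) x - p x := by
    intro x
    have hD2 : HasDerivAt (fun y => -(f y * deriv f y) - r y)
        ((-(deriv f x * deriv f x + f x * deriv (deriv f) x)) - (p x - g x)) x :=
      (((hDf x).mul (hDf1 x)).neg).sub (hDr x)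
    rw [hvfun, hD2.deriv]
    simp only [hgdef]
    ring
  -- the antiderivative
  have hDPhi : ∀ x, HasDerivAt
      (fun y => -(f y) ^ 4 / 4 - (f y) ^ 2 * (deriv f y) ^ 2 - (f y) ^ 2 * p y
        - (p y) ^ 2 + (r y) ^ 2)
      (3 * f x ^ 2 * v x + v x * (deriv f x) ^ 2 + 2 * f x * deriv f x * deriv v x) x := by
    intro x
    have h := (((((((hDf x).pow 4).neg).div_const 4).sub
      (((hDf x).pow 2).mul ((hDf1 x).pow 2))).sub
      (((hDf x).pow 2).mul (hDp x))).sub ((hDp x).pow 2)).add ((hDr x).pow 2)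
    refine h.congr_deriv ?_
    rw [hveq x, hv1eq x]
    simp only [hgdef, Pi.pow_apply]
    push_cast
    ring
  have hint : Continuous (fun x =>
      3 * f x ^ 2 * v x + v x * (deriv f x) ^ 2 + 2 * f x * deriv f x * deriv v x) :=
    (((continuous_const.mul (hfc.pow 2)).mul hvc).add (hvc.mul (hf1c.pow 2))).add
      (((continuous_const.mul hfc).mul hf1c).mul hv1c)
  rw [intervalIntegral.integral_eq_sub_of_hasDerivAt (fun x _ => hDPhi x)
    (hint.intervalIntegrable 0 (2 * π))]
  have e1 : f (2 * π) = f 0 := by simpa using hfp 0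
  have e2 : deriv f (2 * π) = deriv f 0 := by simpa using hf1p 0
  have e3 : p (2 * π) = p 0 := by simpa using hpp 0
  have e4 : r (2 * π) = r 0 := by simpa using hrp 0
  rw [e1, e2, e3, e4]
  ring
lemma hasDerivAt_param_integral (F : ℝ × ℝ → ℝ) (hF : ContDiff ℝ ∞ F) (a b t : ℝ) :
    HasDerivAt (fun s => ∫ x in a..b, F (s, x))
      (∫ x in a..b, pdv (1,0) F (t, x)) t := by
  have hd1c : Continuous (pdv (1,0) F) := (contDiff_pdv hF _).continuous
  have hFc : Continuous F := hF.continuous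
  have hKc : IsCompact (Set.Icc (t-1) (t+1) ×ˢ Set.uIcc a b) :=
    isCompact_Icc.prod isCompact_uIcc
  obtain ⟨C, hC⟩ := hKc.exists_bound_of_continuousOn hd1c.continuousOn
  have hsl : ∀ s : ℝ, Continuous (fun x => F (s, x)) :=
    fun s => hFc.comp (continuous_const.prodMk continuous_id)
  have h := intervalIntegral.hasDerivAt_integral_of_dominated_loc_of_deriv_le
    (F := fun s x => F (s, x)) (F' := fun s x => pdv (1,0) F (s, x)) (a := a) (b := b)
    (x₀ := t) (bound := fun _ => C) (s := Metric.ball t 1) (Metric.ball_mem_nhds t one_pos)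
    (Filter.Eventually.of_forall fun s => (hsl s).aestronglyMeasurable)
    ((hsl t).intervalIntegrable (μ := MeasureTheory.volume) a b)
    ((hd1c.comp (continuous_const.prodMk continuous_id)).aestronglyMeasurable)
    (Filter.Eventually.of_forall ?_)
    intervalIntegrable_const
    (Filter.Eventually.of_forall fun x _ s _ => hasDerivAt_slice1 hF s x)
  · exact h.2
  · intro x hx s hs
    apply hC
    refine Set.mem_prod.mpr ⟨?_, Set.uIoc_subset_uIcc hx⟩
    rw [Metric.mem_ball, Real.dist_eq] at hs
    have := abs_lt.mp hs
    exact Set.mem_Icc.mpr ⟨by linarith [this.1], by linarith [this.2]⟩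

theorem camassa_holm_h1_conserved
    (u m : ℝ → ℝ → ℝ)
    (hu : ContDiff ℝ (⊤ : ℕ∞) (Function.uncurry u))
    (hup : ∀ t, Function.Periodic (u t) (2 * π))
    (hm : ∀ t x, m t x = u t x - iteratedDeriv 2 (u t) x)
    (heq : ∀ t x, deriv (fun s => m s x) t + deriv (m t) x * u t x
        + 2 * m t x * deriv (u t) x = 0) :
    ∀ t, deriv (fun s => (1/2) * ∫ x in (0:ℝ)..(2 * π),
        (u s x)^3 + u s x * (deriv (u s) x)^2) t = 0 := by
  intro t
  set U : ℝ × ℝ → ℝ := Function.uncurry u with hUdef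
  have hUapp : ∀ s x, U (s, x) = u s x := fun _ _ => rfl
  have hU : ContDiff ℝ ∞ U := hu.of_le (by simp)
  have hU2 : ContDiff ℝ ∞ (pdv (0,1) U) := contDiff_pdv hU _
  have hU22 : ContDiff ℝ ∞ (pdv (0,1) (pdv (0,1) U)) := contDiff_pdv hU2 _
  have hU1 : ContDiff ℝ ∞ (pdv (1,0) U) := contDiff_pdv hU _
  have hU12 : ContDiff ℝ ∞ (pdv (0,1) (pdv (1,0) U)) := contDiff_pdv hU1 _
  -- spatial derivatives of u s
  have hder : ∀ s x, deriv (u s) x = pdv (0,1) U (s, x) :=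
    fun s x => (hasDerivAt_slice2 hU s x).deriv
  have hderfun : ∀ s, deriv (u s) = fun x => pdv (0,1) U (s, x) := fun s => funext (hder s)
  have hder2 : ∀ s x, deriv (deriv (u s)) x = pdv (0,1) (pdv (0,1) U) (s, x) := by
    intro s x; rw [hderfun s]; exact (hasDerivAt_slice2 hU2 s x).deriv
  have hder2fun : ∀ s, deriv (deriv (u s)) = fun x => pdv (0,1) (pdv (0,1) U) (s, x) :=
    fun s => funext (hder2 s)
  have hder3 : ∀ s x, deriv (deriv (deriv (u s))) x
      = pdv (0,1) (pdv (0,1) (pdv (0,1) U)) (s, x) := by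
    intro s x; rw [hder2fun s]; exact (hasDerivAt_slice2 hU22 s x).deriv
  have hit2 : ∀ s x, iteratedDeriv 2 (u s) x = pdv (0,1) (pdv (0,1) U) (s, x) := by
    intro s x
    rw [show (2:ℕ) = 1 + 1 from rfl, iteratedDeriv_succ, iteratedDeriv_one]
    exact hder2 s x
  have hmfun : ∀ s, m s = fun x => U (s, x) - pdv (0,1) (pdv (0,1) U) (s, x) :=
    fun s => funext fun x => by rw [hm s x, hit2 s x, hUapp s x]
  -- fixed time t
  set v : ℝ → ℝ := fun x => pdv (1,0) U (t, x) with hvdef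
  have hvx : ∀ x, pdv (1,0) U (t, x) = v x := fun _ => rfl
  have hvC : ContDiff ℝ ∞ v := hU1.comp (contDiff_const.prodMk contDiff_id)
  have hfC : ContDiff ℝ ∞ (u t) := hU.comp (contDiff_const.prodMk contDiff_id)
  have hvper : Function.Periodic v (2 * π) := by
    intro x
    have h1 : (fun s => U (s, x + 2 * π)) = fun s => U (s, x) :=
      funext fun s => hup s x
    simp only [hvdef]
    rw [← (hasDerivAt_slice1 hU t (x + 2 * π)).deriv, h1,
      (hasDerivAt_slice1 hU t x).deriv]
  have hdv : ∀ x, deriv v x = pdv (0,1) (pdv (1,0) U) (t, x) :=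
    fun x => (hasDerivAt_slice2 hU1 t x).deriv
  have hdvfun : deriv v = fun x => pdv (0,1) (pdv (1,0) U) (t, x) := funext hdv
  have hdv2 : ∀ x, deriv (deriv v) x = pdv (0,1) (pdv (0,1) (pdv (1,0) U)) (t, x) := by
    intro x; rw [hdvfun]; exact (hasDerivAt_slice2 hU12 t x).deriv
  have hcomm1 : ∀ q, pdv (1,0) (pdv (0,1) U) q = pdv (0,1) (pdv (1,0) U) q :=
    fun q => pdv_comm hU (0,1) (1,0) q
  have hcomm1fun : pdv (1,0) (pdv (0,1) U) = pdv (0,1) (pdv (1,0) U) := funext hcomm1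
  have hcomm2 : ∀ q, pdv (1,0) (pdv (0,1) (pdv (0,1) U)) q
      = pdv (0,1) (pdv (0,1) (pdv (1,0) U)) q := by
    intro q
    rw [pdv_comm hU2 (0,1) (1,0) q, hcomm1fun]
  -- the PDE at time t in purely spatial form
  have hpde : ∀ x, (v x - deriv (deriv v) x)
      + (deriv (u t) x - deriv (deriv (deriv (u t))) x) * u t x
      + 2 * (u t x - deriv (deriv (u t)) x) * deriv (u t) x = 0 := by
    intro x
    have H := heq t x
    have hts : deriv (fun s => m s x) t = v x - deriv (deriv v) x := by
      have hfun : (fun s => m s x) = fun s => U (s, x) - pdv (0,1) (pdv (0,1) U) (s, x) :=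
        funext fun s => by rw [hmfun s]
      rw [hfun, HasDerivAt.deriv (f := fun s => U (s, x) - pdv (0,1) (pdv (0,1) U) (s, x)) ((hasDerivAt_slice1 hU t x).sub (hasDerivAt_slice1 hU22 t x)),
        hcomm2 (t, x), ← hdv2 x, hvx x]
    have htx : deriv (m t) x = deriv (u t) x - deriv (deriv (deriv (u t))) x := by
      rw [hmfun t, HasDerivAt.deriv (f := fun y => U (t, y) - pdv (0,1) (pdv (0,1) U) (t, y)) ((hasDerivAt_slice2 hU t x).sub (hasDerivAt_slice2 hU22 t x)),
        ← hder t x, ← hder3 t x]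
    have hmx : m t x = u t x - deriv (deriv (u t)) x := by
      rw [hm t x, hit2 t x, ← hder2 t x]
    rw [hts, htx, hmx] at H
    linarith [H]
  -- rewrite the functional through G
  set G : ℝ × ℝ → ℝ := fun q => U q ^ 3 + U q * (pdv (0,1) U q) ^ 2 with hGdef
  have hGC : ContDiff ℝ ∞ G := (hU.pow 3).add (hU.mul (hU2.pow 2))
  have hrw : (fun s => (1/2 : ℝ) * ∫ x in (0:ℝ)..(2 * π),
        ((u s x)^3 + u s x * (deriv (u s) x)^2))
      = fun s => (1/2 : ℝ) * ∫ x in (0:ℝ)..(2 * π), G (s, x) := by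
    funext s
    congr 1
    apply intervalIntegral.integral_congr
    intro x _
    simp only [hGdef]
    rw [hder s x, hUapp s x]
  rw [hrw]
  have hkey := hasDerivAt_param_integral G hGC 0 (2 * π) t
  rw [(HasDerivAt.const_mul (1/2 : ℝ) hkey).deriv]
  have hig : ∀ x, pdv (1,0) G (t, x) = 3 * u t x ^ 2 * v x + v x * deriv (u t) x ^ 2
      + 2 * u t x * deriv (u t) x * deriv v x := by
    intro x
    have h1 : HasDerivAt (fun s => G (s, x)) (pdv (1,0) G (t, x)) t :=
      hasDerivAt_slice1 hGC t x
    have e1 : HasDerivAt (fun s => U (s, x)) (v x) t := hasDerivAt_slice1 hU t x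
    have e2 : HasDerivAt (fun s => pdv (0,1) U (s, x))
        (pdv (1,0) (pdv (0,1) U) (t, x)) t := hasDerivAt_slice1 hU2 t x
    have h2 : HasDerivAt (fun s => U (s, x) ^ 3 + U (s, x) * (pdv (0,1) U (s, x)) ^ 2)
        (3 * U (t, x) ^ 2 * v x + (v x * pdv (0,1) U (t, x) ^ 2
          + U (t, x) * (2 * pdv (0,1) U (t, x) * pdv (1,0) (pdv (0,1) U) (t, x)))) t := by
      have h3 := (e1.pow 3).add (e1.mul (e2.pow 2))
      refine h3.congr_deriv ?_
      simp only [Pi.pow_apply]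
      push_cast
      ring
    have h4 := h1.unique h2
    rw [h4, hcomm1 (t, x), ← hdv x, ← hder t x, hUapp t x]
    ring
  rw [intervalIntegral.integral_congr (μ := MeasureTheory.volume)
    (g := fun x => 3 * u t x ^ 2 * v x + v x * deriv (u t) x ^ 2
      + 2 * u t x * deriv (u t) x * deriv v x) (fun x _ => hig x)]
  rw [main_integral (u t) v hfC hvC (hup t) hvper hpde]
  norm_num
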